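/- If R is a bounded dominant region of the k-Catalan arrangement of an irreducible crystallographic root system Φ, then its pseudomaximal alcove equals its maximal alcove. -/

import Mathlib

open scoped Pointwise RealInnerProductSpace

/-- A crystallographic root system together with a choice of simple system. -/
structure RootSystemData (V : Type*) [NormedAddCommGroup V] [InnerProductSpace ℝ V] where
  Φ : Set V
  S : Set V
  finite : Φ.Finite
  ne_zero : ∀ α ∈ Φ, α ≠ 0
  reflect_mem : ∀ α ∈ Φ, ∀ β ∈ Φ, β - (2 * (inner ℝ β α : ℝ) / (inner ℝ α α : ℝ)) • α ∈ Φ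
  crystal : ∀ α ∈ Φ, ∀ β ∈ Φ, ∃ m : ℤ, 2 * (inner ℝ β α : ℝ) / (inner ℝ α α : ℝ) = (m : ℝ)
  reduced : ∀ α ∈ Φ, ∀ t : ℝ, t • α ∈ Φ → t = 1 ∨ t = -1
  S_sub : S ⊆ Φ
  S_indep : LinearIndependent ℝ ((↑) : S → V)
  decomp : ∀ α ∈ Φ, α ∈ AddSubmonoid.closure S ∨ -α ∈ AddSubmonoid.closure S

namespace RootSystemData

variable {V : Type*} [NormedAddCommGroup V] [InnerProductSpace ℝ V] (D : RootSystemData V)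

/-- The positive roots. -/
def pos : Set V := {α ∈ D.Φ | α ∈ AddSubmonoid.closure D.S}

/-- The root poset order: `α ≤ β` iff `β - α` is a nonnegative integer combination
of simple roots. -/
def rle (α β : V) : Prop := β - α ∈ AddSubmonoid.closure D.S

/-- An (order) ideal of the root poset. -/
def IsIdeal (I : Set V) : Prop :=
  I ⊆ D.pos ∧ ∀ α ∈ I, ∀ β ∈ D.pos, D.rle β α → β ∈ I

/-- The order filters complementary to a chain of ideals, with the conventions
`J 0 = Φ⁺` (as `I 0 = ∅`) and `J i = J k` for `i > k`. -/
def Jf (k : ℕ) (I : ℕ → Set V) (i : ℕ) : Set V := D.pos \ I (min i k)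

/-- A geometric chain of `k` ideals in the root poset. -/
structure IsGeomChain (k : ℕ) (I : ℕ → Set V) : Prop where
  zero : I 0 = ∅
  ideal : ∀ i, 1 ≤ i → i ≤ k → D.IsIdeal (I i)
  mono : ∀ i j, i ≤ j → j ≤ k → I i ⊆ I j
  geomI : ∀ i j, i + j ≤ k → (I i + I j) ∩ D.pos ⊆ I (i + j)
  geomJ : ∀ i j, (D.Jf k I i + D.Jf k I j) ∩ D.pos ⊆ D.Jf k I (i + j)

/-- A chain of ideals is positive if `S ⊆ I k`. -/
def IsPositiveChain (k : ℕ) (I : ℕ → Set V) : Prop := D.S ⊆ I k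

/-- The set of values `r₁ + … + r_m` over all expressions `α = α₁ + … + α_m` with
`α_i ∈ I (r i)` and `1 ≤ r i ≤ k`; its least element (when it exists) is `r_α(𝓘)`. -/
def rVals (_D : RootSystemData V) (k : ℕ) (I : ℕ → Set V) (α : V) : Set ℕ :=
  {N | ∃ m : ℕ, ∃ a : Fin m → V, ∃ r : Fin m → ℕ,
    (∀ i, 1 ≤ r i ∧ r i ≤ k ∧ a i ∈ I (r i)) ∧ (∑ i, a i) = α ∧ (∑ i, r i) = N}

/-- The extension `𝓘̲` of a geometric chain of `k` ideals to a chain of `k+1` ideals,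
with `I̲_{k+1} = ⋃_{i+j=k+1} ((I_i + I_j) ∩ Φ⁺) ∪ I_k ∪ S`. -/
def Ibar (k : ℕ) (I : ℕ → Set V) : ℕ → Set V := fun i =>
  if i ≤ k then I i
  else (⋃ (p : ℕ × ℕ) (_ : p.1 + p.2 = k + 1), (I p.1 + I p.2) ∩ D.pos) ∪ I k ∪ D.S

/-- `α` is a rank `r` indecomposable element of the chain of ideals `I`. -/
def IsIndec (k : ℕ) (I : ℕ → Set V) (r : ℕ) (α : V) : Prop :=
  α ∈ I r ∧ IsLeast (D.rVals k I α) r ∧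
  (∀ i j, i + j = r → α ∉ I i + I j) ∧
  (∀ β ∈ D.pos, ∀ t, t ≤ k → IsLeast (D.rVals k I (α + β)) t → β ∈ I (t - r))

/-- The complement of the `k`-Catalan arrangement of `Φ`. -/
def catComp (k : ℕ) : Set V :=
  {x | ∀ α ∈ D.Φ, ∀ r : ℕ, r ≤ k → (inner ℝ x α : ℝ) ≠ (r : ℝ)}

/-- A region of the `k`-Catalan arrangement: a connected component of the complement. -/
def IsRegion (k : ℕ) (R : Set V) : Prop :=
  ∃ x ∈ D.catComp k, R = connectedComponentIn (D.catComp k) x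

/-- A dominant region of the `k`-Catalan arrangement. -/
def IsDomRegion (k : ℕ) (R : Set V) : Prop :=
  D.IsRegion k R ∧ ∀ x ∈ R, ∀ α ∈ D.pos, 0 < (inner ℝ x α : ℝ)

/-- The complement of the affine Coxeter arrangement of `Φ`. -/
def affComp : Set V := {x | ∀ α ∈ D.Φ, ∀ r : ℤ, (inner ℝ x α : ℝ) ≠ (r : ℝ)}

/-- An alcove: a connected component of the complement of the affine Coxeter arrangement. -/
def IsAlcove (A : Set V) : Prop :=
  ∃ x ∈ D.affComp, A = connectedComponentIn D.affComp x

/-- The hyperplane `H_α^r` supports a facet of `R`. -/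
def IsWall (_D : RootSystemData V) (R : Set V) (α : V) (r : ℝ) : Prop :=
  ∃ x, (inner ℝ x α : ℝ) = r ∧ ∃ ε > 0, ∀ y, (inner ℝ y α : ℝ) = r → dist y x < ε → y ∈ closure R

/-- `H_α^r` is a ceiling of the dominant region (or alcove) `R`: a wall not through
the origin with `R` on the same side as the origin. -/
def IsCeiling (R : Set V) (α : V) (r : ℝ) : Prop :=
  D.IsWall R α r ∧ 0 < r ∧ ∀ x ∈ R, (inner ℝ x α : ℝ) < r

/-- `H_α^r` is a floor of the dominant region (or alcove) `R`: a wall not through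
the origin separating `R` from the origin. -/
def IsFloor (R : Set V) (α : V) (r : ℝ) : Prop :=
  D.IsWall R α r ∧ 0 < r ∧ ∀ x ∈ R, r < (inner ℝ x α : ℝ)

/-- The chain of ideals `θ(R)` associated to a dominant region `R`. -/
def theta (R : Set V) : ℕ → Set V := fun i =>
  {α ∈ D.pos | ∀ x ∈ R, (inner ℝ x α : ℝ) < (i : ℝ)}

/-- `B` is the maximal alcove of the (bounded) region corresponding to the positive chain
of ideals `I`, i.e. the alcove with `r(B,α) = r_α(𝓘)` for all positive roots `α`. -/
def IsMaxAlcoveOf (k : ℕ) (I : ℕ → Set V) (B : Set V) : Prop :=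
  D.IsAlcove B ∧ ∀ α ∈ D.pos, ∃ r : ℕ, IsLeast (D.rVals k I α) r ∧
    ∀ x ∈ B, ((r : ℝ) - 1 < (inner ℝ x α : ℝ) ∧ (inner ℝ x α : ℝ) < (r : ℝ))

/-- The root system `Φ` is irreducible. -/
def Irred : Prop :=
  ∀ Φ₁ Φ₂ : Set V, Φ₁ ∪ Φ₂ = D.Φ → (∀ a ∈ Φ₁, ∀ b ∈ Φ₂, (inner ℝ a b : ℝ) = 0) →
    Φ₁ = ∅ ∨ Φ₂ = ∅

end RootSystemData

/-!
Boundedness of `R` forces every simple root into `θ(R)_k`: otherwise, moving a point of `R` in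
the direction dual to a simple root `s` with `⟪x, s⟫ > k` never meets a Catalan hyperplane, so `R`
would contain a ray. Together with `θ(R)_0 = ∅`, this lets every element of rank `k + 1` of the
extended chain be rewritten as a sum of elements of `θ(R)` of total rank at most `k + 1`, so
`r_α` is the same for the chain and its extension. Two alcoves with the same `r_α` for all
positive roots lie in the same open slabs `r_α - 1 < ⟪x, α⟫ < r_α`, whose intersection is convex and
misses every affine hyperplane; hence they coincide.
-/

section General

variable {V : Type*} [NormedAddCommGroup V] [InnerProductSpace ℝ V]

theorem IsLeast.of_subset_of_forall_exists_le {α : Type*} [Preorder α] {s t : Set α} {a : α}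
    (ha : IsLeast s a) (hst : s ⊆ t) (hts : ∀ b ∈ t, ∃ c ∈ s, c ≤ b) : IsLeast t a :=
  ⟨hst ha.1, fun b hb => let ⟨_, hc, hcb⟩ := hts b hb; (ha.2 hc).trans hcb⟩

theorem inner_nonneg_of_mem_closure {S : Set V} {x α : V} (hx : ∀ s ∈ S, 0 ≤ ⟪x, s⟫)
    (hα : α ∈ AddSubmonoid.closure S) : 0 ≤ ⟪x, α⟫ := by
  induction hα using AddSubmonoid.closure_induction with
  | mem s hs => exact hx s hs
  | zero => simp
  | add a b _ _ ha hb => rw [inner_add_right]; exact add_nonneg ha hb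

theorem exists_inner_pos_of_linearIndependent {S : Set V} (hfin : S.Finite)
    (hS : LinearIndependent ℝ ((↑) : S → V)) {s : V} (hs : s ∈ S) :
    ∃ ω : V, 0 < ⟪ω, s⟫ ∧ ∀ t ∈ S, t ≠ s → ⟪ω, t⟫ = 0 := by
  set U := Submodule.span ℝ (S \ {s})
  have : FiniteDimensional ℝ U := FiniteDimensional.span_of_finite ℝ (hfin.subset Set.sdiff_subset)
  have hsU : s ∉ U := by
    have := hS.notMem_span_image (s := {t : S | (t : V) ≠ s}) (x := ⟨s, hs⟩) (by simp)
    rwa [show ((↑) : S → V) '' {t : S | (t : V) ≠ s} = S \ {s} by ext; simp [and_comm]] at this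
  set ω := s - U.starProjection s
  have hωU : ∀ w ∈ U, ⟪ω, w⟫ = 0 := U.starProjection_inner_eq_zero s
  have hω : ω ≠ 0 := fun h => hsU (sub_eq_zero.mp h ▸ U.starProjection_apply_mem s)
  refine ⟨ω, ?_, fun t ht hts => hωU t (Submodule.subset_span ⟨ht, hts⟩)⟩
  calc 0 < ⟪ω, ω⟫ := real_inner_self_pos.mpr hω
    _ = ⟪ω, s⟫ - ⟪ω, U.starProjection s⟫ := inner_sub_right _ _ _
    _ = ⟪ω, s⟫ := by rw [hωU _ (U.starProjection_apply_mem s), sub_zero]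

theorem sub_mem_closure_of_inner_pos {S : Set V} {s ω α : V}
    (hωs : ∀ t ∈ S, t ≠ s → ⟪ω, t⟫ = 0) (hα : α ∈ AddSubmonoid.closure S) (hωα : 0 < ⟪ω, α⟫) :
    α - s ∈ AddSubmonoid.closure S := by
  induction hα using AddSubmonoid.closure_induction with
  | mem t ht =>
    obtain rfl : t = s := by_contra fun h => hωα.ne' (hωs t ht h)
    simp
  | zero => simp at hωα
  | add a b ha hb iha ihb =>
    rw [inner_add_right] at hωα
    rcases lt_or_ge 0 ⟪ω, a⟫ with ha' | ha'
    · rw [add_sub_right_comm]; exact add_mem (iha ha') hb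
    · rw [add_sub_assoc]; exact add_mem ha (ihb (by linarith))

theorem not_isBounded_of_ray_subset {R : Set V} {x ω : V} (hω : ω ≠ 0)
    (hR : ∀ t : ℝ, 0 ≤ t → x + t • ω ∈ R) : ¬ Bornology.IsBounded R := by
  intro hbdd
  obtain ⟨M, hM⟩ := isBounded_iff_forall_norm_le.mp hbdd
  have hωn : 0 < ‖ω‖ := norm_pos_iff.mpr hω
  have hM0 : 0 ≤ M + ‖x‖ := by linarith [hM x (by simpa using hR 0 le_rfl), norm_nonneg x]
  set t := (M + ‖x‖ + 1) / ‖ω‖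
  have ht : t * ‖ω‖ = M + ‖x‖ + 1 := div_mul_cancel₀ _ hωn.ne'
  have htω : ‖t • ω‖ = t * ‖ω‖ := by rw [norm_smul, Real.norm_of_nonneg (by positivity)]
  have htR := hM _ (hR t (by positivity))
  have := norm_sub_le (x + t • ω) x
  rw [add_sub_cancel_left] at this
  linarith

theorem intCast_notMem_Ioo_sub_one (m r : ℤ) : (m : ℝ) ∉ Set.Ioo ((r : ℝ) - 1) r := by
  rintro ⟨h1, h2⟩
  have h1' : r - 1 < m := by exact_mod_cast h1
  have h2' : m < r := by exact_mod_cast h2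
  omega

theorem eq_connectedComponentIn_of_mem {X : Type*} [TopologicalSpace X] {C R : Set X} {y : X}
    (hR : ∃ x ∈ C, R = connectedComponentIn C x) (hy : y ∈ R) : R = connectedComponentIn C y := by
  obtain ⟨x, -, rfl⟩ := hR
  exact connectedComponentIn_eq hy

end General

namespace RootSystemData

variable {V : Type*} [NormedAddCommGroup V] [InnerProductSpace ℝ V] (D : RootSystemData V)

theorem neg_mem {α : V} (hα : α ∈ D.Φ) : -α ∈ D.Φ := by
  have hαα : ⟪α, α⟫ ≠ 0 := inner_self_ne_zero.mpr (D.ne_zero α hα)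
  have h := D.reflect_mem α hα α hα
  rwa [mul_div_assoc, div_self hαα, mul_one, two_smul, sub_add_cancel_left] at h

theorem neg_mem_pos {α : V} (hα : α ∈ D.Φ) (hαp : α ∉ D.pos) : -α ∈ D.pos :=
  (D.decomp α hα).elim (fun h => absurd ⟨hα, h⟩ hαp) fun h => ⟨D.neg_mem hα, h⟩

theorem mem_pos_of_mem_S {s : V} (hs : s ∈ D.S) : s ∈ D.pos :=
  ⟨D.S_sub hs, AddSubmonoid.subset_closure hs⟩

variable {D}

theorem theta_zero {k : ℕ} {R : Set V} (hR : D.IsDomRegion k R) : D.theta R 0 = ∅ := by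
  obtain ⟨⟨x, hx, rfl⟩, hdom⟩ := hR
  refine Set.eq_empty_of_forall_notMem fun α ⟨hα, hlt⟩ => ?_
  have hxR := mem_connectedComponentIn hx
  linarith [hdom x hxR α hα, (hlt x hxR).trans_eq Nat.cast_zero]

/-- The roots whose value grows along the ray are those with `α - s ∈ ℕS`, so at `x` they
already exceed `k`. -/
theorem add_smul_mem_catComp {k : ℕ} {x ω s : V} (hx : x ∈ D.catComp k)
    (hdom : ∀ α ∈ D.pos, 0 < ⟪x, α⟫) (hxs : k < ⟪x, s⟫) (hωs : 0 < ⟪ω, s⟫)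
    (hω : ∀ t ∈ D.S, t ≠ s → ⟪ω, t⟫ = 0) {t : ℝ} (ht : 0 ≤ t) : x + t • ω ∈ D.catComp k := by
  intro α hα r hr
  have hinner : ∀ β, ⟪x + t • ω, β⟫ = ⟪x, β⟫ + t * ⟪ω, β⟫ := fun β => by
    rw [inner_add_left, real_inner_smul_left]
  have hωS : ∀ u ∈ D.S, 0 ≤ ⟪ω, u⟫ := by
    intro u hu
    rcases eq_or_ne u s with rfl | hus
    · exact hωs.le
    · exact (hω u hu hus).ge
  have hωpos : ∀ β ∈ D.pos, 0 ≤ ⟪ω, β⟫ := fun β hβ => inner_nonneg_of_mem_closure hωS hβ.2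
  have hr' : (r : ℝ) ≤ k := by exact_mod_cast hr
  by_cases hαp : α ∈ D.pos
  · rcases (hωpos α hαp).eq_or_lt with hωα | hωα
    · rw [hinner, ← hωα, mul_zero, add_zero]
      exact hx α hα r hr
    · have hxα : ⟪x, α⟫ = ⟪x, s⟫ + ⟪x, α - s⟫ := by rw [← inner_add_right, add_sub_cancel]
      have := inner_nonneg_of_mem_closure (fun u hu => (hdom u (D.mem_pos_of_mem_S hu)).le)
        (sub_mem_closure_of_inner_pos hω hαp.2 hωα)
      rw [hinner]
      nlinarith
  · have hneg := hdom (-α) (D.neg_mem_pos hα hαp)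
    have := hωpos (-α) (D.neg_mem_pos hα hαp)
    rw [inner_neg_right] at hneg this
    rw [hinner]
    nlinarith [r.cast_nonneg (α := ℝ)]

theorem isPositiveChain_theta {k : ℕ} {R : Set V} (hR : D.IsDomRegion k R)
    (hbdd : Bornology.IsBounded R) : D.IsPositiveChain k (D.theta R) := by
  intro s hs
  refine ⟨D.mem_pos_of_mem_S hs, fun x hx => ?_⟩
  by_contra! hxs
  obtain ⟨hreg, hdom⟩ := hR
  have hRx := eq_connectedComponentIn_of_mem hreg hx
  have hxc : x ∈ D.catComp k := connectedComponentIn_subset _ _ (hRx ▸ hx)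
  have hlt : (k : ℝ) < ⟪x, s⟫ := hxs.lt_of_ne (hxc s (D.S_sub hs) k le_rfl).symm
  obtain ⟨ω, hωs, hω⟩ :=
    exists_inner_pos_of_linearIndependent (D.finite.subset D.S_sub) D.S_indep hs
  have hray : (fun t : ℝ => x + t • ω) '' Set.Ici 0 ⊆ R := by
    rw [hRx]
    refine (isPreconnected_Ici.image _ (by fun_prop)).subset_connectedComponentIn
      ⟨0, Set.self_mem_Ici, by simp⟩ ?_
    rintro _ ⟨t, ht, rfl⟩
    exact add_smul_mem_catComp hxc (hdom x hx) hlt hωs hω ht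
  exact not_isBounded_of_ray_subset (by rintro rfl; simp at hωs)
    (fun t ht => hray ⟨t, ht, rfl⟩) hbdd

def rankedElems (k : ℕ) (I : ℕ → Set V) : Set (V × ℕ) :=
  {p | 1 ≤ p.2 ∧ p.2 ≤ k ∧ p.1 ∈ I p.2}

theorem mem_rVals_iff_mem_closure {k N : ℕ} {I : ℕ → Set V} {α : V} :
    N ∈ D.rVals k I α ↔ (α, N) ∈ AddSubmonoid.closure (rankedElems k I) := by
  constructor
  · rintro ⟨m, a, r, h, rfl, rfl⟩
    rw [prod_mk_sum]
    exact AddSubmonoid.sum_mem _ fun i _ => AddSubmonoid.subset_closure (h i)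
  · intro h
    obtain ⟨l, hl, hsum⟩ := AddSubmonoid.exists_list_of_mem_closure h
    refine ⟨l.length, fun i => l[i.1].1, fun i => l[i.1].2, fun i => hl _ (l.getElem_mem i.2),
      ?_, ?_⟩
    · rw [← Prod.fst_sum, Fin.sum_univ_getElem, hsum]
    · rw [← Prod.snd_sum, Fin.sum_univ_getElem, hsum]

theorem rVals_subset_rVals_Ibar {k : ℕ} {I : ℕ → Set V} {α : V} :
    D.rVals k I α ⊆ D.rVals (k + 1) (D.Ibar k I) α := by
  intro N hN
  rw [mem_rVals_iff_mem_closure] at hN ⊢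
  refine AddSubmonoid.closure_mono (fun p (hp : p ∈ rankedElems k I) => ?_) hN
  refine ⟨hp.1, hp.2.1.trans k.le_succ, ?_⟩
  rw [Ibar, if_pos hp.2.1]
  exact hp.2.2

theorem exists_le_of_mem_rankedElems_Ibar {k : ℕ} {I : ℕ → Set V} (h0 : I 0 = ∅)
    (hS : D.IsPositiveChain k I) {p : V × ℕ} (hp : p ∈ rankedElems (k + 1) (D.Ibar k I)) :
    ∃ N ≤ p.2, (p.1, N) ∈ AddSubmonoid.closure (rankedElems k I) := by
  obtain ⟨a, r⟩ := p
  obtain ⟨hr1, hrk, ha⟩ := hp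
  have one_le : ∀ {i : ℕ} {b : V}, b ∈ I i → 1 ≤ i := fun {i b} hb =>
    Nat.one_le_iff_ne_zero.mpr fun hi => by simp [hi, h0] at hb
  by_cases hr : r ≤ k
  · rw [Ibar, if_pos hr] at ha
    exact ⟨r, le_rfl, AddSubmonoid.subset_closure ⟨hr1, hr, ha⟩⟩
  rw [Ibar, if_neg hr] at ha
  have of_mem_Ik : a ∈ I k → ∃ N ≤ r, (a, N) ∈ AddSubmonoid.closure (rankedElems k I) :=
    fun ha => ⟨k, by omega, AddSubmonoid.subset_closure ⟨one_le ha, le_rfl, ha⟩⟩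
  rcases ha with (ha | ha) | ha
  · simp only [Set.mem_iUnion] at ha
    obtain ⟨⟨i, j⟩, hij, ⟨b, hb, c, hc, rfl⟩, -⟩ := ha
    have hi := one_le hb
    have hj := one_le hc
    refine ⟨i + j, by simp only at hij ⊢; omega, ?_⟩
    have hbi : (b, i) ∈ rankedElems k I := ⟨hi, by omega, hb⟩
    have hcj : (c, j) ∈ rankedElems k I := ⟨hj, by omega, hc⟩
    exact add_mem (AddSubmonoid.subset_closure hbi) (AddSubmonoid.subset_closure hcj)
  · exact of_mem_Ik ha
  · exact of_mem_Ik (hS ha)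

theorem exists_le_of_mem_rVals_Ibar {k N : ℕ} {I : ℕ → Set V} {α : V} (h0 : I 0 = ∅)
    (hS : D.IsPositiveChain k I) (hN : N ∈ D.rVals (k + 1) (D.Ibar k I) α) :
    ∃ N' ∈ D.rVals k I α, N' ≤ N := by
  rw [mem_rVals_iff_mem_closure] at hN
  suffices ∀ p ∈ AddSubmonoid.closure (rankedElems (k + 1) (D.Ibar k I)),
      ∃ N' ≤ p.2, (p.1, N') ∈ AddSubmonoid.closure (rankedElems k I) by
    obtain ⟨N', hle, hN'⟩ := this _ hN
    exact ⟨N', mem_rVals_iff_mem_closure.mpr hN', hle⟩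
  intro p hp
  induction hp using AddSubmonoid.closure_induction with
  | mem p hp => exact exists_le_of_mem_rankedElems_Ibar h0 hS hp
  | zero => exact ⟨0, le_rfl, zero_mem _⟩
  | add p q _ _ hp hq =>
    obtain ⟨M, hM, hpM⟩ := hp
    obtain ⟨N, hN, hqN⟩ := hq
    exact ⟨M + N, add_le_add hM hN, add_mem hpM hqN⟩

theorem isLeast_rVals_Ibar {k r : ℕ} {I : ℕ → Set V} {α : V} (h0 : I 0 = ∅)
    (hS : D.IsPositiveChain k I) (hr : IsLeast (D.rVals k I α) r) :
    IsLeast (D.rVals (k + 1) (D.Ibar k I) α) r :=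
  hr.of_subset_of_forall_exists_le rVals_subset_rVals_Ibar
    fun _ hN => exists_le_of_mem_rVals_Ibar h0 hS hN

theorem segment_subset_affComp {x y : V}
    (h : ∀ α ∈ D.pos, ∃ r : ℤ,
      ⟪x, α⟫ ∈ Set.Ioo ((r : ℝ) - 1) r ∧ ⟪y, α⟫ ∈ Set.Ioo ((r : ℝ) - 1) r) :
    segment ℝ x y ⊆ D.affComp := by
  rintro _ ⟨a, b, ha, hb, hab, rfl⟩ α hα m hm
  have hslab : ∀ β ∈ D.pos, ∃ r : ℤ, ⟪a • x + b • y, β⟫ ∈ Set.Ioo ((r : ℝ) - 1) r := by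
    intro β hβ
    obtain ⟨r, hx, hy⟩ := h β hβ
    refine ⟨r, ?_⟩
    rw [inner_add_left, real_inner_smul_left, real_inner_smul_left]
    exact convex_Ioo _ _ hx hy ha hb hab
  by_cases hαp : α ∈ D.pos
  · obtain ⟨r, hr⟩ := hslab α hαp
    exact intCast_notMem_Ioo_sub_one m r (hm ▸ hr)
  · obtain ⟨r, hr⟩ := hslab (-α) (D.neg_mem_pos hα hαp)
    rw [inner_neg_right, hm] at hr
    exact intCast_notMem_Ioo_sub_one (-m) r (by simpa using hr)

theorem IsAlcove.eq_of_forall_mem_Ioo {A B : Set V} (hA : D.IsAlcove A) (hB : D.IsAlcove B)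
    (h : ∀ α ∈ D.pos, ∃ r : ℤ, (∀ x ∈ A, ⟪x, α⟫ ∈ Set.Ioo ((r : ℝ) - 1) r) ∧
      ∀ x ∈ B, ⟪x, α⟫ ∈ Set.Ioo ((r : ℝ) - 1) r) :
    A = B := by
  obtain ⟨x, hx, rfl⟩ := hA
  obtain ⟨y, hy, rfl⟩ := hB
  have hseg := D.segment_subset_affComp fun α hα =>
    let ⟨r, hAr, hBr⟩ := h α hα
    ⟨r, hAr x (mem_connectedComponentIn hx), hBr y (mem_connectedComponentIn hy)⟩
  exact connectedComponentIn_eq <| (convex_segment x y).isPreconnected.subset_connectedComponentIn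
    (left_mem_segment ℝ x y) hseg (right_mem_segment ℝ x y)

theorem IsMaxAlcoveOf.eq_of_forall_isLeast {k k' : ℕ} {I I' : ℕ → Set V} {A B : Set V}
    (hA : D.IsMaxAlcoveOf k I A) (hB : D.IsMaxAlcoveOf k' I' B)
    (h : ∀ α ∈ D.pos, ∀ r, IsLeast (D.rVals k I α) r → IsLeast (D.rVals k' I' α) r) : A = B := by
  refine hA.1.eq_of_forall_mem_Ioo hB.1 fun α hα => ?_
  obtain ⟨r, hr, hAr⟩ := hA.2 α hα
  obtain ⟨r', hr', hBr⟩ := hB.2 α hα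
  obtain rfl := hr'.unique (h α hα r hr)
  exact ⟨r', fun x hx => by simpa using hAr x hx, fun x hx => by simpa using hBr x hx⟩

end RootSystemData

theorem statement11_general {V : Type*} [NormedAddCommGroup V] [InnerProductSpace ℝ V]
    (D : RootSystemData V) (k : ℕ) (R A B : Set V)
    (hR : D.IsDomRegion k R) (hbdd : Bornology.IsBounded R)
    (hA : D.IsMaxAlcoveOf k (D.theta R) A)
    (hB : D.IsMaxAlcoveOf (k + 1) (D.Ibar k (D.theta R)) B) :
    A = B :=
  hA.eq_of_forall_isLeast hB fun _ _ _ hr =>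
    RootSystemData.isLeast_rVals_Ibar (RootSystemData.theta_zero hR)
      (RootSystemData.isPositiveChain_theta hR hbdd) hr

/-- If `R` is a bounded dominant region of the `k`-Catalan arrangement of
an irreducible root system, then its pseudomaximal alcove equals its maximal alcove. -/
theorem statement11 {V : Type*} [NormedAddCommGroup V] [InnerProductSpace ℝ V]
    (D : RootSystemData V) (hirr : D.Irred) (k : ℕ) (R A B : Set V)
    (hR : D.IsDomRegion k R) (hbdd : Bornology.IsBounded R)
    (hA : D.IsMaxAlcoveOf k (D.theta R) A)
    (hB : D.IsMaxAlcoveOf (k + 1) (D.Ibar k (D.theta R)) B) :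
    A = B :=
  statement11_general D k R A B hR hbdd hA hB
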